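/- arXiv:2402.18168 — 2 statements merged into one kernel-verified Lean document; each statement's English description precedes it below -/
import Mathlib

section
/- In the setting of the dgl (L₁, D) built from minimal Quillen models of 2-cones, for all A, B, C ∈ 𝕃(V₀) and T ∈ 𝕃(W₀): D(σ_A σ_B σ_C (T)) = (−1)^{|A|+|B|} σ_A σ_{[B,C]}(T) − (−1)^{|A||B|} σ_B σ_{[A,C]}(T) − (−1)^{|A|} σ_{[A,B]} σ_C (T) − (−1)^{|A|+|B|+|C||T|} [σ_A σ_B (T), C] + [A, σ_B σ_C (T)] − (−1)^{|A|+|B|+|A||B|} [B, σ_A σ_C (T)]. -/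
universe u

/-- A graded Lie algebra over `ℚ`: a `ℤ`-graded vector space with a bilinear bracket
satisfying graded antisymmetry and the graded Jacobi identity on homogeneous elements. -/
structure GLA (Lc : Type u) [AddCommGroup Lc] [Module ℚ Lc] where
  grade : ℤ → Submodule ℚ Lc
  internal : DirectSum.IsInternal grade
  br : Lc →ₗ[ℚ] Lc →ₗ[ℚ] Lc
  br_mem : ∀ {i j : ℤ} {x y : Lc}, x ∈ grade i → y ∈ grade j → br x y ∈ grade (i + j)
  antisymm : ∀ {i j : ℤ} {x y : Lc}, x ∈ grade i → y ∈ grade j →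
      br x y = -((-1 : ℚ) ^ (i * j) • br y x)
  jacobi : ∀ {i j : ℤ} {x y : Lc} (z : Lc), x ∈ grade i → y ∈ grade j →
      br x (br y z) = br (br x y) z + (-1 : ℚ) ^ (i * j) • br y (br x z)

namespace GLA

variable {Lc : Type u} [AddCommGroup Lc] [Module ℚ Lc]

/-- The Lie subalgebra (as a submodule closed under the bracket) generated by
a graded family of subspaces. -/
def lieSub (G : GLA Lc) (p : ℤ → Submodule ℚ Lc) : Submodule ℚ Lc :=
  sInf {q | (∀ i, p i ≤ q) ∧ ∀ x ∈ q, ∀ y ∈ q, G.br x y ∈ q}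

/-- The submodule of decomposable elements of `L`: the span of all brackets. -/
def dec (G : GLA Lc) : Submodule ℚ Lc :=
  Submodule.span ℚ {x : Lc | ∃ a b : Lc, x = G.br a b}

/-- A graded Lie algebra is reduced if it vanishes in degrees `≤ 0`. -/
def Reduced (G : GLA Lc) : Prop := ∀ i : ℤ, i ≤ 0 → G.grade i = ⊥

end GLA



namespace GLAaux

theorem E1 {m n : ℤ} (k : ℤ) (h : m = n + 2 * k) : (-1 : ℚ) ^ m = (-1) ^ n := by
  subst h
  rw [zpow_add₀ (by norm_num : (-1 : ℚ) ≠ 0), zpow_mul]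
  norm_num

theorem E2 {m n : ℤ} (k : ℤ) (h : m = n + (2 * k + 1)) : (-1 : ℚ) ^ m = -(-1) ^ n := by
  subst h
  rw [zpow_add₀ (by norm_num : (-1 : ℚ) ≠ 0), zpow_add₀ (by norm_num : (-1 : ℚ) ≠ 0),
    zpow_mul]
  norm_num

theorem Emul (m n : ℤ) : (-1 : ℚ) ^ m * (-1 : ℚ) ^ n = (-1) ^ (m + n) :=
  (zpow_add₀ (by norm_num : (-1 : ℚ) ≠ 0) m n).symm

variable {Lc : Type u} [AddCommGroup Lc] [Module ℚ Lc] (G : GLA Lc)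

theorem le_lieSub (p : ℤ → Submodule ℚ Lc) (i : ℤ) : p i ≤ G.lieSub p :=
  le_sInf fun _ hq => hq.1 i

theorem br_mem_lieSub (p : ℤ → Submodule ℚ Lc) {x y : Lc} (hx : x ∈ G.lieSub p)
    (hy : y ∈ G.lieSub p) : G.br x y ∈ G.lieSub p := by
  rw [GLA.lieSub, Submodule.mem_sInf] at *
  exact fun q hq => hq.2 x (hx q hq) y (hy q hq)

theorem lieSub_le (p : ℤ → Submodule ℚ Lc) (q : Submodule ℚ Lc) (h1 : ∀ i, p i ≤ q)
    (h2 : ∀ x ∈ q, ∀ y ∈ q, G.br x y ∈ q) : G.lieSub p ≤ q :=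
  sInf_le ⟨h1, h2⟩

theorem lieSub_mono {p q : ℤ → Submodule ℚ Lc} (h : ∀ i, p i ≤ q i) :
    G.lieSub p ≤ G.lieSub q :=
  lieSub_le G p _ (fun i => (h i).trans (le_lieSub G q i))
    (fun _ hx _ hy => br_mem_lieSub G q hx hy)

/-- Graded induction principle for `lieSub`. -/
theorem gradedInd (p s : ℤ → Submodule ℚ Lc) (hps : ∀ i, p i ≤ s i)
    (hsg : ∀ i, s i ≤ G.grade i)
    (hbr : ∀ (i j : ℤ) (x y : Lc), x ∈ s i → y ∈ s j → G.br x y ∈ s (i + j)) :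
    ∀ {a : ℤ} {A : Lc}, A ∈ G.lieSub p → A ∈ G.grade a → A ∈ s a := by
  intro a A hA hAg
  have hq : G.lieSub p ≤ ⨆ i, s i := by
    refine lieSub_le G p _ (fun i => (hps i).trans (le_iSup s i)) ?_
    intro x hx y hy
    refine Submodule.iSup_induction (motive := fun x => G.br x y ∈ ⨆ i, s i) s hx ?_ ?_ ?_
    · intro i x hxi
      refine Submodule.iSup_induction (motive := fun y => G.br x y ∈ ⨆ i, s i) s hy ?_ ?_ ?_
      · intro j y hyj
        exact Submodule.mem_iSup_of_mem (i + j) (hbr i j x y hxi hyj)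
      · simp
      · intro u v hu hv
        rw [map_add]; exact add_mem hu hv
    · simp
    · intro u v hu hv
      rw [map_add, LinearMap.add_apply]; exact add_mem hu hv
  have hmem : A ∈ ⨆ i, s i := hq hA
  have key : ∃ y ∈ s a, A - y ∈ ⨆ (i : ℤ) (_ : i ≠ a), G.grade i := by
    refine Submodule.iSup_induction
      (motive := fun x => ∃ y ∈ s a, x - y ∈ ⨆ (i : ℤ) (_ : i ≠ a), G.grade i) s hmem ?_ ?_ ?_
    · intro i x hxi
      by_cases hia : i = a
      · exact ⟨x, hia ▸ hxi, by simp⟩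
      · exact ⟨0, zero_mem _, by
          simpa using Submodule.mem_iSup_of_mem i (Submodule.mem_iSup_of_mem hia
            ((hsg i) hxi))⟩
    · exact ⟨0, zero_mem _, by simp⟩
    · rintro x y ⟨u, hu, hxu⟩ ⟨v, hv, hyv⟩
      exact ⟨u + v, add_mem hu hv, by
        have h' : x + y - (u + v) = (x - u) + (y - v) := by abel
        rw [h']; exact add_mem hxu hyv⟩
  obtain ⟨y, hy, hAy⟩ := key
  have hdisj := G.internal.submodule_iSupIndep a
  have h1 : A - y ∈ G.grade a := sub_mem hAg ((hsg a) hy)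
  have h0 : A - y = 0 := Submodule.disjoint_def.mp hdisj _ h1 hAy
  have hAy' : A = y := sub_eq_zero.mp h0
  exact hAy' ▸ hy

end GLAaux

open GLAaux

/-- Lemma 3.11.  In the dgl `(L₁, D)` built from minimal Quillen models
of 2-cones, for all homogeneous `A, B, C ∈ 𝕃(V₀)` and homogeneous `T ∈ 𝕃(W₀)`:
`D(σ_A σ_B σ_C (T)) = (-1)^{|A|+|B|} σ_A σ_{[B,C]}(T) - (-1)^{|A||B|} σ_B σ_{[A,C]}(T)
 - (-1)^{|A|} σ_{[A,B]} σ_C (T) - (-1)^{|A|+|B|+|C||T|} [σ_A σ_B (T), C]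
 + [A, σ_B σ_C (T)] - (-1)^{|A|+|B|+|A||B|} [B, σ_A σ_C (T)]`. -/
theorem statement11
    {Lc : Type u} [AddCommGroup Lc] [Module ℚ Lc] (G : GLA Lc)
    (V0 V1 W0 W1 Sp : ℤ → Submodule ℚ Lc)
    -- the ambient free Lie algebra is reduced
    (hred : G.Reduced)
    (hV0 : ∀ i, V0 i ≤ G.grade i) (hV1 : ∀ i, V1 i ≤ G.grade i)
    (hW0 : ∀ i, W0 i ≤ G.grade i) (hW1 : ∀ i, W1 i ≤ G.grade i)
    (hSp : ∀ i, Sp i ≤ G.grade i)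
    -- the suspension `s(v ⊗ w)`, bilinear, of degree `|v|+|w|+1`; in `L₁` only
    -- `s(V₀⊗W₀) ⊕ s(V₁⊗W₀) ⊕ s(V₀⊗W₁)` is present
    (sus : Lc →ₗ[ℚ] Lc →ₗ[ℚ] Lc)
    (hsus00 : ∀ {i j : ℤ} {v w : Lc}, v ∈ V0 i → w ∈ W0 j → sus v w ∈ Sp (i + j + 1))
    (hsus10 : ∀ {i j : ℤ} {v w : Lc}, v ∈ V1 i → w ∈ W0 j → sus v w ∈ Sp (i + j + 1))
    (hsus01 : ∀ {i j : ℤ} {v w : Lc}, v ∈ V0 i → w ∈ W1 j → sus v w ∈ Sp (i + j + 1))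
    -- `L₁` is generated by `V ⊕ W ⊕ s(V₀⊗W₀) ⊕ s(V₁⊗W₀) ⊕ s(V₀⊗W₁)`
    (hgen : G.lieSub (fun i => V0 i ⊔ V1 i ⊔ W0 i ⊔ W1 i ⊔ Sp i) = ⊤)
    -- the derivations `σ_A` for homogeneous `A ∈ 𝕃(V ⊕ W)`
    (sg : ℤ → Lc → (Lc →ₗ[ℚ] Lc))
    (hsg_grade : ∀ {a : ℤ} {A : Lc}, A ∈ G.lieSub (fun i => V0 i ⊔ V1 i ⊔ W0 i ⊔ W1 i) →
      A ∈ G.grade a → ∀ {n : ℤ} {x : Lc}, x ∈ G.grade n → sg a A x ∈ G.grade (n + a + 1))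
    (hsg_der : ∀ {a : ℤ} {A : Lc}, A ∈ G.lieSub (fun i => V0 i ⊔ V1 i ⊔ W0 i ⊔ W1 i) →
      A ∈ G.grade a → ∀ {n : ℤ} (x y : Lc), x ∈ G.grade n →
      sg a A (G.br x y) = G.br (sg a A x) y + (-1 : ℚ) ^ ((a + 1) * n) • G.br x (sg a A y))
    (hsg_vw : ∀ {i j : ℤ} {v w : Lc}, v ∈ V0 i ⊔ V1 i → w ∈ W0 j → sg i v w = sus v w)
    (hsg_vw' : ∀ {i j : ℤ} {v w : Lc}, v ∈ V0 i → w ∈ W1 j → sg i v w = sus v w)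
    (hsg_wv : ∀ {i j : ℤ} {v w : Lc}, v ∈ V0 i ⊔ V1 i → w ∈ W0 j →
      sg j w v = (-1 : ℚ) ^ (i * j) • sus v w)
    (hsg_wv' : ∀ {i j : ℤ} {v w : Lc}, v ∈ V0 i → w ∈ W1 j →
      sg j w v = (-1 : ℚ) ^ (i * j) • sus v w)
    (hsg_vv : ∀ {i i' : ℤ} {v v' : Lc}, v ∈ V0 i ⊔ V1 i → v' ∈ V0 i' ⊔ V1 i' →
      sg i v v' = 0)
    (hsg_ww : ∀ {j j' : ℤ} {w w' : Lc}, w ∈ W0 j ⊔ W1 j → w' ∈ W0 j' ⊔ W1 j' →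
      sg j w w' = 0)
    (hsg_vS : ∀ {i k : ℤ} {v x : Lc}, v ∈ V0 i ⊔ V1 i → x ∈ Sp k → sg i v x = 0)
    (hsg_wS : ∀ {j k : ℤ} {w x : Lc}, w ∈ W0 j ⊔ W1 j → x ∈ Sp k → sg j w x = 0)
    (hsg_Av : ∀ {a : ℤ} {A : Lc}, A ∈ G.lieSub (fun i => V0 i ⊔ V1 i ⊔ W0 i ⊔ W1 i) →
      A ∈ G.grade a → ∀ {i : ℤ} {v : Lc}, v ∈ V0 i ⊔ V1 i →
      sg a A v = (-1 : ℚ) ^ (i * a) • sg i v A)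
    (hsg_Aw : ∀ {a : ℤ} {A : Lc}, A ∈ G.lieSub (fun i => V0 i ⊔ V1 i ⊔ W0 i ⊔ W1 i) →
      A ∈ G.grade a → ∀ {j : ℤ} {w : Lc}, w ∈ W0 j ⊔ W1 j →
      sg a A w = (-1 : ℚ) ^ (j * a) • sg j w A)
    (hsg_AS : ∀ {a : ℤ} {A : Lc}, A ∈ G.lieSub (fun i => V0 i ⊔ V1 i ⊔ W0 i ⊔ W1 i) →
      A ∈ G.grade a → ∀ {k : ℤ} {x : Lc}, x ∈ Sp k → sg a A x = 0)
    -- the degree `-1` derivation `D` of `L₁`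
    (D : Lc →ₗ[ℚ] Lc)
    (hD_grade : ∀ {i : ℤ} {x : Lc}, x ∈ G.grade i → D x ∈ G.grade (i - 1))
    (hD_der : ∀ {i : ℤ} (x y : Lc), x ∈ G.grade i →
      D (G.br x y) = G.br (D x) y + (-1 : ℚ) ^ ((-1 : ℤ) * i) • G.br x (D y))
    -- `D = ∂_V` on `V`, `D = ∂_W` on `W`, with `∂(V₀) = ∂(W₀) = 0`,
    -- `∂(V₁) ⊆ 𝕃(V₀)` and `∂(W₁) ⊆ 𝕃(W₀)`
    (hD_V0 : ∀ {i : ℤ} {v : Lc}, v ∈ V0 i → D v = 0)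
    (hD_W0 : ∀ {j : ℤ} {w : Lc}, w ∈ W0 j → D w = 0)
    (hD_V1 : ∀ {i : ℤ} {v : Lc}, v ∈ V1 i → D v ∈ G.lieSub V0)
    (hD_W1 : ∀ {j : ℤ} {w : Lc}, w ∈ W1 j → D w ∈ G.lieSub W0)
    -- minimality of the two Quillen models
    (hD_V1dec : ∀ {i : ℤ} {v : Lc}, v ∈ V1 i → D v ∈ G.dec)
    (hD_W1dec : ∀ {j : ℤ} {w : Lc}, w ∈ W1 j → D w ∈ G.dec)
    -- the value of `D` on the suspension generators
    (hD_sus00 : ∀ {i j : ℤ} {v w : Lc}, v ∈ V0 i → w ∈ W0 j → D (sus v w) = G.br v w)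
    (hD_sus10 : ∀ {i j : ℤ} {v w : Lc}, v ∈ V1 i → w ∈ W0 j →
      D (sus v w) = G.br v w - (-1 : ℚ) ^ ((i + 1) * j) • sg j w (D v))
    (hD_sus01 : ∀ {i j : ℤ} {v w : Lc}, v ∈ V0 i → w ∈ W1 j →
      D (sus v w) = G.br v w - (-1 : ℚ) ^ i • sg i v (D w))
    -- `(L₁, D)` is a dgl
    (hDD : ∀ x : Lc, D (D x) = 0)
 :
    ∀ {a : ℤ} {A : Lc}, A ∈ G.lieSub V0 → A ∈ G.grade a →
    ∀ {b : ℤ} {B : Lc}, B ∈ G.lieSub V0 → B ∈ G.grade b →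
    ∀ {c : ℤ} {C : Lc}, C ∈ G.lieSub V0 → C ∈ G.grade c →
    ∀ {t : ℤ} {T : Lc}, T ∈ G.lieSub W0 → T ∈ G.grade t →
      D (sg a A (sg b B (sg c C T)))
        = (-1 : ℚ) ^ (a + b) • sg a A (sg (b + c) (G.br B C) T)
          - (-1 : ℚ) ^ (a * b) • sg b B (sg (a + c) (G.br A C) T)
          - (-1 : ℚ) ^ a • sg (a + b) (G.br A B) (sg c C T)
          - (-1 : ℚ) ^ (a + b + c * t) • G.br (sg a A (sg b B T)) C
          + G.br A (sg b B (sg c C T))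
          - (-1 : ℚ) ^ (a + b + a * b) • G.br B (sg a A (sg c C T)) := by
  -- abbreviations
  set fam4 : ℤ → Submodule ℚ Lc := fun i => V0 i ⊔ V1 i ⊔ W0 i ⊔ W1 i with hfam4
  set Ssub : ℤ → Submodule ℚ Lc := fun k => Submodule.span ℚ
    {x : Lc | ∃ (i j : ℤ) (v w : Lc), v ∈ V0 i ∧ w ∈ W0 j ∧ k = i + j + 1 ∧ x = sus v w}
    with hSsub
  set famL : ℤ → Submodule ℚ Lc := fun i => V0 i ⊔ W0 i ⊔ Ssub i with hfamL
  have hV0f : ∀ i, V0 i ≤ fam4 i := fun i =>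
    le_sup_left.trans (le_sup_left.trans le_sup_left)
  have hW0f : ∀ i, W0 i ≤ fam4 i := fun i => le_sup_right.trans le_sup_left
  have hVL : G.lieSub V0 ≤ G.lieSub fam4 := lieSub_mono G hV0f
  have hWL : G.lieSub W0 ≤ G.lieSub fam4 := lieSub_mono G hW0f
  have hV0L : ∀ i, V0 i ≤ famL i := fun i => le_sup_left.trans le_sup_left
  have hW0L : ∀ i, W0 i ≤ famL i := fun i => le_sup_right.trans le_sup_left
  have hSL : ∀ i, Ssub i ≤ famL i := fun i => le_sup_right
  have hVLS : G.lieSub V0 ≤ G.lieSub famL := lieSub_mono G hV0L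
  have hWLS : G.lieSub W0 ≤ G.lieSub famL := lieSub_mono G hW0L
  have hSgrade : ∀ k, Ssub k ≤ G.grade k := by
    intro k
    rw [hSsub]
    refine Submodule.span_le.mpr ?_
    rintro x ⟨i, j, v, w, hv, hw, rfl, rfl⟩
    exact hSp _ (hsus00 hv hw)
  have hfamLgrade : ∀ i, famL i ≤ G.grade i := by
    intro i
    exact sup_le (sup_le (hV0 i) (hW0 i)) (hSgrade i)
  -- D vanishes on 𝕃(V₀) and 𝕃(W₀)
  have hDV : ∀ {i : ℤ} {X : Lc}, X ∈ G.lieSub V0 → X ∈ G.grade i → D X = 0 := by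
    intro i X hX hXg
    have h := gradedInd G V0 (fun i => G.grade i ⊓ LinearMap.ker D)
      (fun i x hx => ⟨hV0 i hx, LinearMap.mem_ker.mpr (hD_V0 hx)⟩)
      (fun i => inf_le_left)
      (fun i j x y hx hy => ⟨G.br_mem hx.1 hy.1, LinearMap.mem_ker.mpr (by
        rw [hD_der x y hx.1, LinearMap.mem_ker.mp hx.2, LinearMap.mem_ker.mp hy.2]
        simp)⟩) hX hXg
    exact LinearMap.mem_ker.mp h.2
  have hDW : ∀ {i : ℤ} {X : Lc}, X ∈ G.lieSub W0 → X ∈ G.grade i → D X = 0 := by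
    intro i X hX hXg
    have h := gradedInd G W0 (fun i => G.grade i ⊓ LinearMap.ker D)
      (fun i x hx => ⟨hW0 i hx, LinearMap.mem_ker.mpr (hD_W0 hx)⟩)
      (fun i => inf_le_left)
      (fun i j x y hx hy => ⟨G.br_mem hx.1 hy.1, LinearMap.mem_ker.mpr (by
        rw [hD_der x y hx.1, LinearMap.mem_ker.mp hx.2, LinearMap.mem_ker.mp hy.2]
        simp)⟩) hX hXg
    exact LinearMap.mem_ker.mp h.2
  -- σ_v vanishes on 𝕃(V₀)
  have hvV : ∀ {i : ℤ} {v : Lc}, v ∈ V0 i → ∀ {x : ℤ} {X : Lc}, X ∈ G.lieSub V0 →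
      X ∈ G.grade x → sg i v X = 0 := by
    intro i v hv x X hX hXg
    have hvf : v ∈ G.lieSub fam4 := le_lieSub G fam4 i (hV0f i hv)
    have hvg : v ∈ G.grade i := hV0 i hv
    have h := gradedInd G V0 (fun k => G.grade k ⊓ LinearMap.ker (sg i v))
      (fun k u hu => ⟨hV0 k hu, LinearMap.mem_ker.mpr
        (hsg_vv (Submodule.mem_sup_left hv) (Submodule.mem_sup_left hu))⟩)
      (fun k => inf_le_left)
      (fun k l u u' hu hu' => ⟨G.br_mem hu.1 hu'.1, LinearMap.mem_ker.mpr (by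
        rw [hsg_der hvf hvg u u' hu.1, LinearMap.mem_ker.mp hu.2,
          LinearMap.mem_ker.mp hu'.2]
        simp)⟩) hX hXg
    exact LinearMap.mem_ker.mp h.2
  -- σ_A vanishes on 𝕃(V₀)
  have hAV : ∀ {a : ℤ} {A : Lc}, A ∈ G.lieSub V0 → A ∈ G.grade a →
      ∀ {x : ℤ} {X : Lc}, X ∈ G.lieSub V0 → X ∈ G.grade x → sg a A X = 0 := by
    intro a A hA hAg x X hX hXg
    have hAf : A ∈ G.lieSub fam4 := hVL hA
    have h := gradedInd G V0 (fun k => G.grade k ⊓ LinearMap.ker (sg a A))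
      (fun k u hu => ⟨hV0 k hu, LinearMap.mem_ker.mpr (by
        rw [hsg_Av hAf hAg (Submodule.mem_sup_left hu), hvV hu hA hAg]
        simp)⟩)
      (fun k => inf_le_left)
      (fun k l u u' hu hu' => ⟨G.br_mem hu.1 hu'.1, LinearMap.mem_ker.mpr (by
        rw [hsg_der hAf hAg u u' hu.1, LinearMap.mem_ker.mp hu.2,
          LinearMap.mem_ker.mp hu'.2]
        simp)⟩) hX hXg
    exact LinearMap.mem_ker.mp h.2
  -- formula for D (σ_w A)
  have hK1' : ∀ {j : ℤ} {w : Lc}, w ∈ W0 j → ∀ {a : ℤ} {A : Lc}, A ∈ G.lieSub V0 →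
      A ∈ G.grade a → D (sg j w A) = (-1 : ℚ) ^ (j * a) • G.br A w := by
    intro j w hw a A hA hAg
    have hwf : w ∈ G.lieSub fam4 := le_lieSub G fam4 j (hW0f j hw)
    have hwg : w ∈ G.grade j := hW0 j hw
    have h := gradedInd G V0
      (fun k => (G.grade k ⊓ G.lieSub V0) ⊓
        LinearMap.ker (D ∘ₗ (sg j w) - (-1 : ℚ) ^ (j * k) • (G.br.flip w)))
      (fun k u hu => ⟨⟨hV0 k hu, le_lieSub G V0 k hu⟩, LinearMap.mem_ker.mpr (by
        simp only [LinearMap.sub_apply, LinearMap.comp_apply, LinearMap.smul_apply,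
          LinearMap.flip_apply]
        rw [hsg_wv (Submodule.mem_sup_left hu) hw, map_smul, hD_sus00 hu hw,
          show k * j = j * k from mul_comm k j, sub_self])⟩)
      (fun k => inf_le_left.trans inf_le_left)
      (fun i k u u' hu hu' => ⟨⟨G.br_mem hu.1.1 hu'.1.1,
          br_mem_lieSub G V0 hu.1.2 hu'.1.2⟩, LinearMap.mem_ker.mpr (by
        have k1 : D (sg j w u) = (-1 : ℚ) ^ (j * i) • G.br u w := by
          have h' := LinearMap.mem_ker.mp hu.2
          simp only [LinearMap.sub_apply, LinearMap.comp_apply, LinearMap.smul_apply,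
            LinearMap.flip_apply, sub_eq_zero] at h'
          exact h'
        have k2 : D (sg j w u') = (-1 : ℚ) ^ (j * k) • G.br u' w := by
          have h' := LinearMap.mem_ker.mp hu'.2
          simp only [LinearMap.sub_apply, LinearMap.comp_apply, LinearMap.smul_apply,
            LinearMap.flip_apply, sub_eq_zero] at h'
          exact h'
        have k3 : D u = 0 := hDV hu.1.2 hu.1.1
        have k4 : D u' = 0 := hDV hu'.1.2 hu'.1.1
        simp only [LinearMap.sub_apply, LinearMap.comp_apply, LinearMap.smul_apply,
          LinearMap.flip_apply, sub_eq_zero]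
        rw [hsg_der hwf hwg u u' hu.1.1, map_add, map_smul,
          hD_der (sg j w u) u' (hsg_grade hwf hwg hu.1.1),
          hD_der u (sg j w u') hu.1.1, k1, k2, k3, k4]
        have hjac : G.br (G.br u u') w
            = G.br u (G.br u' w) - (-1 : ℚ) ^ (i * k) • G.br u' (G.br u w) := by
          rw [eq_sub_iff_add_eq]
          exact (G.jacobi w hu.1.1 hu'.1.1).symm
        have hanti : G.br (G.br u w) u'
            = -((-1 : ℚ) ^ ((i + j) * k) • G.br u' (G.br u w)) :=
          G.antisymm (G.br_mem hu.1.1 hwg) hu'.1.1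
        simp only [map_zero, map_smul, LinearMap.smul_apply, LinearMap.zero_apply,
          smul_zero, zero_add, add_zero, smul_add, smul_smul, smul_neg, smul_sub]
        rw [hjac, hanti]
        simp only [smul_sub, smul_neg, smul_smul]
        match_scalars
        · simp only [Emul, mul_one]
          rw [show j*i + (i+j)*k = j*(i+k) + i*k by ring]
        · simp only [Emul, mul_one]
          rw [E1 (n := j*(i+k)) 0 (by ring)])⟩) hA hAg
    have h2 := LinearMap.mem_ker.mp h.2
    simp only [LinearMap.sub_apply, LinearMap.comp_apply, LinearMap.smul_apply,
      LinearMap.flip_apply, sub_eq_zero] at h2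
    exact h2
  -- σ_P kills σ_w B for B ∈ 𝕃(V₀)
  have hV6 : ∀ {j : ℤ} {w : Lc}, w ∈ W0 j → ∀ {p : ℤ} {P : Lc}, P ∈ G.lieSub V0 →
      P ∈ G.grade p → ∀ {b : ℤ} {B : Lc}, B ∈ G.lieSub V0 → B ∈ G.grade b →
      sg p P (sg j w B) = 0 := by
    intro j w hw p P hP hPg b B hB hBg
    have hPf : P ∈ G.lieSub fam4 := hVL hP
    have hwf : w ∈ G.lieSub fam4 := le_lieSub G fam4 j (hW0f j hw)
    have hwg : w ∈ G.grade j := hW0 j hw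
    have h := gradedInd G V0
      (fun k => (G.grade k ⊓ G.lieSub V0) ⊓ LinearMap.ker ((sg p P) ∘ₗ (sg j w)))
      (fun k u hu => ⟨⟨hV0 k hu, le_lieSub G V0 k hu⟩, LinearMap.mem_ker.mpr (by
        rw [LinearMap.comp_apply, hsg_wv (Submodule.mem_sup_left hu) hw, map_smul,
          hsg_AS hPf hPg (hsus00 hu hw)]
        simp)⟩)
      (fun k => inf_le_left.trans inf_le_left)
      (fun k l u u' hu hu' => ⟨⟨G.br_mem hu.1.1 hu'.1.1,
          br_mem_lieSub G V0 hu.1.2 hu'.1.2⟩, LinearMap.mem_ker.mpr (by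
        have k1 : sg p P (sg j w u) = 0 := by
          simpa [LinearMap.comp_apply] using LinearMap.mem_ker.mp hu.2
        have k2 : sg p P (sg j w u') = 0 := by
          simpa [LinearMap.comp_apply] using LinearMap.mem_ker.mp hu'.2
        have k3 : sg p P u = 0 := hAV hP hPg hu.1.2 hu.1.1
        have k4 : sg p P u' = 0 := hAV hP hPg hu'.1.2 hu'.1.1
        rw [LinearMap.comp_apply, hsg_der hwf hwg u u' hu.1.1, map_add, map_smul,
          hsg_der hPf hPg (sg j w u) u' (hsg_grade hwf hwg hu.1.1),
          hsg_der hPf hPg u (sg j w u') hu.1.1, k1, k2, k3, k4]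
        simp)⟩) hB hBg
    exact LinearMap.mem_ker.mp h.2
  -- σ_w A lies in the subalgebra generated by V₀, W₀ and the suspensions
  have hMemS : ∀ {j : ℤ} {w : Lc}, w ∈ W0 j → ∀ {a : ℤ} {A : Lc}, A ∈ G.lieSub V0 →
      A ∈ G.grade a → sg j w A ∈ G.lieSub famL := by
    intro j w hw a A hA hAg
    have hwf : w ∈ G.lieSub fam4 := le_lieSub G fam4 j (hW0f j hw)
    have hwg : w ∈ G.grade j := hW0 j hw
    have h := gradedInd G V0
      (fun k => (G.grade k ⊓ G.lieSub V0) ⊓ Submodule.comap (sg j w) (G.lieSub famL))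
      (fun k u hu => ⟨⟨hV0 k hu, le_lieSub G V0 k hu⟩, by
        have : sg j w u = (-1 : ℚ) ^ (k * j) • sus u w :=
          hsg_wv (Submodule.mem_sup_left hu) hw
        simp only [SetLike.mem_coe, Submodule.mem_comap, this]
        refine Submodule.smul_mem _ _ (le_lieSub G famL (k + j + 1) (hSL (k + j + 1) ?_))
        exact Submodule.subset_span ⟨k, j, u, w, hu, hw, rfl, rfl⟩⟩)
      (fun k => inf_le_left.trans inf_le_left)
      (fun k l u u' hu hu' => ⟨⟨G.br_mem hu.1.1 hu'.1.1,
          br_mem_lieSub G V0 hu.1.2 hu'.1.2⟩, by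
        simp only [SetLike.mem_coe, Submodule.mem_comap]
        rw [hsg_der hwf hwg u u' hu.1.1]
        refine add_mem (br_mem_lieSub G famL hu.2 (hVLS hu'.1.2)) (Submodule.smul_mem _ _ ?_)
        exact br_mem_lieSub G famL (hVLS hu.1.2) hu'.2⟩) hA hAg
    exact h.2
  -- σ_Q preserves that subalgebra
  have hMemSig : ∀ {q : ℤ} {Q : Lc}, Q ∈ G.lieSub V0 → Q ∈ G.grade q →
      ∀ {x : ℤ} {X : Lc}, X ∈ G.lieSub famL → X ∈ G.grade x →
      sg q Q X ∈ G.lieSub famL := by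
    intro q Q hQ hQg x X hX hXg
    have hQf : Q ∈ G.lieSub fam4 := hVL hQ
    have h := gradedInd G famL
      (fun k => (G.grade k ⊓ G.lieSub famL) ⊓ Submodule.comap (sg q Q) (G.lieSub famL))
      (fun k => by
        refine sup_le (sup_le ?_ ?_) ?_
        · intro u hu
          refine ⟨⟨hV0 k hu, le_lieSub G famL k (hV0L k hu)⟩, ?_⟩
          simp only [SetLike.mem_coe, Submodule.mem_comap]
          rw [hsg_Av hQf hQg (Submodule.mem_sup_left hu), hvV hu hQ hQg, smul_zero]
          exact zero_mem _
        · intro u hu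
          refine ⟨⟨hW0 k hu, le_lieSub G famL k (hW0L k hu)⟩, ?_⟩
          simp only [SetLike.mem_coe, Submodule.mem_comap]
          rw [hsg_Aw hQf hQg (Submodule.mem_sup_left hu)]
          exact Submodule.smul_mem _ _ (hMemS hu hQ hQg)
        · refine le_inf (le_inf (hSgrade k) ((hSL k).trans (le_lieSub G famL k))) ?_
          rw [hSsub, Submodule.span_le]
          rintro u ⟨i', j', v', w', hv', hw', rfl, rfl⟩
          simp only [SetLike.mem_coe, Submodule.mem_comap]
          rw [hsg_AS hQf hQg (hsus00 hv' hw')]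
          exact zero_mem _)
      (fun k => inf_le_left.trans inf_le_left)
      (fun k l u u' hu hu' => ⟨⟨G.br_mem hu.1.1 hu'.1.1,
          br_mem_lieSub G famL hu.1.2 hu'.1.2⟩, by
        simp only [SetLike.mem_coe, Submodule.mem_comap]
        rw [hsg_der hQf hQg u u' hu.1.1]
        exact add_mem (br_mem_lieSub G famL hu.2 hu'.1.2)
          (Submodule.smul_mem _ _ (br_mem_lieSub G famL hu.1.2 hu'.2))⟩) hX hXg
    exact h.2
  -- θ_P := D σ_P + (-1)^p σ_P D is a derivation of degree p
  have hTL : ∀ {p : ℤ} {P : Lc}, P ∈ G.lieSub V0 → P ∈ G.grade p →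
      ∀ {n : ℤ} (x y : Lc), x ∈ G.grade n →
      D (sg p P (G.br x y)) + (-1 : ℚ) ^ p • sg p P (D (G.br x y))
        = G.br (D (sg p P x) + (-1 : ℚ) ^ p • sg p P (D x)) y
          + (-1 : ℚ) ^ (p * n) • G.br x (D (sg p P y) + (-1 : ℚ) ^ p • sg p P (D y)) := by
    intro p P hP hPg n x y hxg
    have hPf : P ∈ G.lieSub fam4 := hVL hP
    rw [hsg_der hPf hPg x y hxg, map_add, map_smul,
      hD_der (sg p P x) y (hsg_grade hPf hPg hxg),
      hD_der x (sg p P y) hxg,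
      hD_der x y hxg, map_add, map_smul,
      hsg_der hPf hPg (D x) y (hD_grade hxg),
      hsg_der hPf hPg x (D y) hxg]
    simp only [map_add, map_smul, LinearMap.add_apply, LinearMap.smul_apply,
      smul_add, smul_smul]
    match_scalars <;> simp only [Emul, mul_one]
    · rw [E2 (n := p + -1*n) (-p-1) (by ring)]; ring
    · rw [E2 (n := (p+1)*n) (m := p + (p+1)*(n-1)) (-1) (by ring)]; ring
    · rw [show (p+1)*n + -1*n = p*n by ring]
    · rw [show p + (-1*n + (p+1)*n) = p*n + p by ring]
  -- D σ_C T = [C, T] on 𝕃(W₀)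
  have hM0 : ∀ {c : ℤ} {C : Lc}, C ∈ G.lieSub V0 → C ∈ G.grade c →
      ∀ {t : ℤ} {T : Lc}, T ∈ G.lieSub W0 → T ∈ G.grade t →
      D (sg c C T) = G.br C T := by
    intro c C hC hCg t T hT hTg
    have hCf : C ∈ G.lieSub fam4 := hVL hC
    have h := gradedInd G W0
      (fun k => (G.grade k ⊓ G.lieSub W0) ⊓ LinearMap.ker (D ∘ₗ (sg c C) - G.br C))
      (fun k u hu => ⟨⟨hW0 k hu, le_lieSub G W0 k hu⟩, LinearMap.mem_ker.mpr (by
        simp only [LinearMap.sub_apply, LinearMap.comp_apply, sub_eq_zero]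
        rw [hsg_Aw hCf hCg (Submodule.mem_sup_left hu), map_smul,
          hK1' hu hC hCg, smul_smul, Emul, E1 (n := 0) (k*c) (by ring), zpow_zero,
          one_smul])⟩)
      (fun k => inf_le_left.trans inf_le_left)
      (fun i k u u' hu hu' => ⟨⟨G.br_mem hu.1.1 hu'.1.1,
          br_mem_lieSub G W0 hu.1.2 hu'.1.2⟩, LinearMap.mem_ker.mpr (by
        have k1 : D (sg c C u) = G.br C u := by
          have h' := LinearMap.mem_ker.mp hu.2
          simpa only [LinearMap.sub_apply, LinearMap.comp_apply, sub_eq_zero] using h'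
        have k2 : D (sg c C u') = G.br C u' := by
          have h' := LinearMap.mem_ker.mp hu'.2
          simpa only [LinearMap.sub_apply, LinearMap.comp_apply, sub_eq_zero] using h'
        have k3 : D u = 0 := hDW hu.1.2 hu.1.1
        have k4 : D u' = 0 := hDW hu'.1.2 hu'.1.1
        simp only [LinearMap.sub_apply, LinearMap.comp_apply, sub_eq_zero]
        rw [hsg_der hCf hCg u u' hu.1.1, map_add, map_smul,
          hD_der (sg c C u) u' (hsg_grade hCf hCg hu.1.1),
          hD_der u (sg c C u') hu.1.1, k1, k2, k3, k4,
          G.jacobi u' hCg hu.1.1]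
        simp only [smul_zero, add_zero, zero_add, map_zero, LinearMap.zero_apply,
          smul_smul]
        rw [Emul, E1 (n := c*i) 0 (by ring)])⟩) hT hTg
    have h2 := LinearMap.mem_ker.mp h.2
    simpa only [LinearMap.sub_apply, LinearMap.comp_apply, sub_eq_zero] using h2
  -- the master commutation identity
  have hM1 : ∀ {p : ℤ} {P : Lc}, P ∈ G.lieSub V0 → P ∈ G.grade p →
      ∀ {q : ℤ} {Q : Lc}, Q ∈ G.lieSub V0 → Q ∈ G.grade q →
      ∀ {x : ℤ} {X : Lc}, X ∈ G.lieSub famL → X ∈ G.grade x →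
      D (sg p P (sg q Q X)) + (-1 : ℚ) ^ p • sg p P (D (sg q Q X))
        = (-1 : ℚ) ^ (p * (q + 1))
            • sg q Q (D (sg p P X) + (-1 : ℚ) ^ p • sg p P (D X))
          - (-1 : ℚ) ^ p • sg (p + q) (G.br P Q) X := by
    intro p P hP hPg q Q hQ hQg x X hX hXg
    have hPf : P ∈ G.lieSub fam4 := hVL hP
    have hQf : Q ∈ G.lieSub fam4 := hVL hQ
    have hPQ : G.br P Q ∈ G.lieSub V0 := br_mem_lieSub G V0 hP hQ
    have hPQg : G.br P Q ∈ G.grade (p + q) := G.br_mem hPg hQg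
    have hPQf : G.br P Q ∈ G.lieSub fam4 := hVL hPQ
    set θP : Lc →ₗ[ℚ] Lc := D ∘ₗ (sg p P) + (-1 : ℚ) ^ p • ((sg p P) ∘ₗ D) with hθP
    have θap : ∀ z : Lc, θP z = D (sg p P z) + (-1 : ℚ) ^ p • sg p P (D z) := by
      intro z
      simp [hθP, LinearMap.add_apply, LinearMap.smul_apply, LinearMap.comp_apply]
    have hTLP : ∀ {n : ℤ} (x y : Lc), x ∈ G.grade n →
        θP (G.br x y) = G.br (θP x) y + (-1 : ℚ) ^ (p * n) • G.br x (θP y) := by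
      intro n x y hx
      rw [θap, θap, θap]
      exact hTL hP hPg x y hx
    have hθgr : ∀ {n : ℤ} {z : Lc}, z ∈ G.grade n → θP z ∈ G.grade (n + p) := by
      intro n z hz
      rw [θap]
      refine add_mem ?_ (Submodule.smul_mem _ _ ?_)
      · have h' := hD_grade (hsg_grade hPf hPg hz)
        have he : n + p + 1 - 1 = n + p := by ring
        rwa [he] at h'
      · have h' := hsg_grade hPf hPg (hD_grade hz)
        have he : n - 1 + p + 1 = n + p := by ring
        rwa [he] at h'
    set Φ : Lc →ₗ[ℚ] Lc :=
      θP ∘ₗ (sg q Q)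
        - ((-1 : ℚ) ^ (p * (q + 1)) • ((sg q Q) ∘ₗ θP)
            - (-1 : ℚ) ^ p • sg (p + q) (G.br P Q)) with hPhi
    have hϕ : ∀ Y : Lc, Φ Y = θP (sg q Q Y)
        - ((-1 : ℚ) ^ (p * (q + 1)) • sg q Q (θP Y)
            - (-1 : ℚ) ^ p • sg (p + q) (G.br P Q) Y) := by
      intro Y
      simp [hPhi, LinearMap.sub_apply, LinearMap.add_apply, LinearMap.smul_apply,
        LinearMap.comp_apply]
    have key := gradedInd G famL (fun k => G.grade k ⊓ LinearMap.ker Φ)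
      (fun k => by
        refine sup_le (sup_le ?_ ?_) ?_
        · -- V0 generators
          intro u hu
          refine ⟨hV0 k hu, LinearMap.mem_ker.mpr ?_⟩
          have huV : u ∈ G.lieSub V0 := le_lieSub G V0 k hu
          have hug : u ∈ G.grade k := hV0 k hu
          have z1 : sg q Q u = 0 := by
            rw [hsg_Av hQf hQg (Submodule.mem_sup_left hu), hvV hu hQ hQg, smul_zero]
          have z2 : sg p P u = 0 := by
            rw [hsg_Av hPf hPg (Submodule.mem_sup_left hu), hvV hu hP hPg, smul_zero]
          have z4 : sg (p + q) (G.br P Q) u = 0 := by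
            rw [hsg_Av hPQf hPQg (Submodule.mem_sup_left hu), hvV hu hPQ hPQg, smul_zero]
          rw [hϕ u]
          simp only [θap, z1, z2, z4, hD_V0 hu, map_zero, smul_zero, add_zero,
            zero_add, sub_zero, zero_sub, neg_zero]
        · -- W0 generators
          intro u hu
          refine ⟨hW0 k hu, LinearMap.mem_ker.mpr ?_⟩
          have huf : u ∈ G.lieSub fam4 := le_lieSub G fam4 k (hW0f k hu)
          have hug : u ∈ G.grade k := hW0 k hu
          have z1 : sg q Q u = (-1 : ℚ) ^ (k * q) • sg k u Q :=
            hsg_Aw hQf hQg (Submodule.mem_sup_left hu)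
          have z2 : sg p P (sg k u Q) = 0 := hV6 hu hP hPg hQ hQg
          have z3 : D (sg k u Q) = (-1 : ℚ) ^ (k * q) • G.br Q u := hK1' hu hQ hQg
          have z4 : sg p P (G.br Q u) = (-1 : ℚ) ^ ((p + 1) * q) • G.br Q (sg p P u) := by
            rw [hsg_der hPf hPg Q u hQg, hAV hP hPg hQ hQg]
            simp
          have z5 : sg p P u = (-1 : ℚ) ^ (k * p) • sg k u P :=
            hsg_Aw hPf hPg (Submodule.mem_sup_left hu)
          have k5 : D (sg k u Q) = (-1 : ℚ) ^ (k * q) • G.br Q u := hK1' hu hQ hQg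
          have k6 : D (sg k u P) = (-1 : ℚ) ^ (k * p) • G.br P u := hK1' hu hP hPg
          have z8 : sg q Q (G.br P u) = (-1 : ℚ) ^ ((q + 1) * p) • G.br P (sg q Q u) := by
            rw [hsg_der hQf hQg P u hPg, hAV hQ hQg hP hPg]
            simp
          have z9 : sg (p + q) (G.br P Q) u
              = (-1 : ℚ) ^ (k * (p + q)) • sg k u (G.br P Q) :=
            hsg_Aw hPQf hPQg (Submodule.mem_sup_left hu)
          have z10 : sg k u (G.br P Q)
              = G.br (sg k u P) Q + (-1 : ℚ) ^ ((k + 1) * p) • G.br P (sg k u Q) :=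
            hsg_der huf hug P Q hPg
          have z11 : G.br (sg k u P) Q
              = -((-1 : ℚ) ^ ((p + k + 1) * q) • G.br Q (sg k u P)) :=
            G.antisymm (hsg_grade huf hug hPg) hQg
          rw [hϕ u]
          simp only [θap, hD_W0 hu, z1, z2, k5, k6, z4, z5, z8, z9, z10, z11,
            map_zero, smul_zero, add_zero, zero_add, map_add, map_smul,
            LinearMap.smul_apply, smul_add, smul_smul, smul_neg, smul_sub, map_neg]
          rw [sub_eq_zero]
          match_scalars <;> simp only [Emul, mul_one, neg_neg]
          · rw [show p + (k*q + k*q + ((p+1)*q + k*p))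
                = p + (k*(p+q) + (p+k+1)*q) by ring]
          · rw [E1 (n := k*q) (m := p*(q+1) + (k*p + k*p + ((q+1)*p + k*q)))
                (p*q + p + k*p) (by ring),
              E1 (n := k*q) (m := p + (k*(p+q) + (k+1)*p)) (p + k*p) (by ring),
              sub_self]
        · -- suspension generators
          refine le_inf (hSgrade k) ?_
          rw [hSsub, Submodule.span_le]
          rintro u ⟨i', j', v', w', hv', hw', rfl, rfl⟩
          simp only [SetLike.mem_coe, LinearMap.mem_ker]
          have hv'g : v' ∈ G.grade i' := hV0 i' hv'
          have hv'V : v' ∈ G.lieSub V0 := le_lieSub G V0 i' hv'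
          have y1 : sg q Q (sus v' w') = 0 := hsg_AS hQf hQg (hsus00 hv' hw')
          have y2 : sg (p + q) (G.br P Q) (sus v' w') = 0 :=
            hsg_AS hPQf hPQg (hsus00 hv' hw')
          have y3 : D (sus v' w') = G.br v' w' := hD_sus00 hv' hw'
          have y4 : sg p P (sus v' w') = 0 := hsg_AS hPf hPg (hsus00 hv' hw')
          have y5 : sg p P (G.br v' w')
              = (-1 : ℚ) ^ ((p + 1) * i') • G.br v' (sg p P w') := by
            rw [hsg_der hPf hPg v' w' hv'g, hAV hP hPg hv'V hv'g]
            simp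
          have y7 : sg q Q (sg p P w') = 0 := by
            rw [hsg_Aw hPf hPg (Submodule.mem_sup_left hw'), map_smul,
              hV6 hw' hQ hQg hP hPg, smul_zero]
          have y6 : sg q Q (G.br v' (sg p P w')) = 0 := by
            rw [hsg_der hQf hQg v' (sg p P w') hv'g, y7,
              hsg_Av hQf hQg (Submodule.mem_sup_left hv'), hvV hv' hQ hQg]
            simp
          rw [hϕ _]
          simp only [θap, y1, y2, y3, y4, y5, y6, map_zero, map_smul, smul_zero,
            add_zero, zero_add, smul_smul]
          simp
        )
      (fun k => inf_le_left)
      (fun i l u u' hu hu' => ⟨G.br_mem hu.1 hu'.1, LinearMap.mem_ker.mpr (by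
        have eu : θP (sg q Q u)
            = (-1 : ℚ) ^ (p * (q + 1)) • sg q Q (θP u)
              - (-1 : ℚ) ^ p • sg (p + q) (G.br P Q) u := by
          have h' := LinearMap.mem_ker.mp hu.2
          rw [hϕ u, sub_eq_zero] at h'
          exact h'
        have eu' : θP (sg q Q u')
            = (-1 : ℚ) ^ (p * (q + 1)) • sg q Q (θP u')
              - (-1 : ℚ) ^ p • sg (p + q) (G.br P Q) u' := by
          have h' := LinearMap.mem_ker.mp hu'.2
          rw [hϕ u', sub_eq_zero] at h'
          exact h'
        rw [hϕ _, sub_eq_zero]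
        rw [hsg_der hQf hQg u u' hu.1, map_add, map_smul,
          hTLP (sg q Q u) u' (hsg_grade hQf hQg hu.1),
          hTLP u (sg q Q u') hu.1, eu, eu',
          hTLP u u' hu.1, map_add, map_smul,
          hsg_der hQf hQg (θP u) u' (hθgr hu.1),
          hsg_der hQf hQg u (θP u') hu.1,
          hsg_der hPQf hPQg u u' hu.1]
        simp only [map_add, map_sub, map_smul, LinearMap.add_apply, LinearMap.sub_apply,
          LinearMap.smul_apply, smul_add, smul_sub, smul_smul, sub_smul, add_smul,
          smul_neg, neg_smul]
        match_scalars <;> simp only [Emul, mul_one]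
        · rw [show p * (i + q + 1) = p * (q + 1) + p * i by ring]
        · rw [E1 (n := (q+1)*i) (m := p*(q+1) + (q+1)*(i+p)) (p*(q+1)) (by ring)]
        · rw [show (q+1)*i + (p*i + p*(q+1)) = p*(q+1) + (p*i + (q+1)*i) by ring]
        · rw [show (q+1)*i + (p*i + p) = p + (p+q+1)*i by ring])⟩)
      hX hXg
    have h2 := LinearMap.mem_ker.mp key.2
    rw [hϕ X, sub_eq_zero, θap] at h2
    exact h2
  -- [B, σ_A X] = (-1)^((a+1) b) σ_A [B, X]
  have hZ : ∀ {a : ℤ} {A : Lc}, A ∈ G.lieSub V0 → A ∈ G.grade a →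
      ∀ {b : ℤ} {B : Lc}, B ∈ G.lieSub V0 → B ∈ G.grade b → ∀ (X : Lc),
      G.br B (sg a A X) = (-1 : ℚ) ^ ((a + 1) * b) • sg a A (G.br B X) := by
    intro a A hA hAg b B hB hBg X
    have h := hsg_der (hVL hA) hAg B X hBg
    rw [hAV hA hAg hB hBg] at h
    simp only [map_zero, LinearMap.zero_apply, zero_add] at h
    rw [h, smul_smul, Emul, E1 (n := 0) ((a+1)*b) (by ring), zpow_zero, one_smul]
  -- final assembly
  intro a A hA hAg b B hB hBg c C hC hCg t T hT hTg
  have hDT : D T = 0 := hDW hT hTg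
  have hX1L : sg c C T ∈ G.lieSub famL := hMemSig hC hCg (hWLS hT) hTg
  have hX1g : sg c C T ∈ G.grade (t + c + 1) := hsg_grade (hVL hC) hCg hTg
  have hDX1 : D (sg c C T) = G.br C T := hM0 hC hCg hT hTg
  have hDBT : D (sg b B T) = G.br B T := hM0 hB hBg hT hTg
  have hDAT : D (sg a A T) = G.br A T := hM0 hA hAg hT hTg
  -- θ_B applied to σ_C T
  have hDX2 : D (sg b B (sg c C T))
      = (-1 : ℚ) ^ (b * (c + 1)) • sg c C (G.br B T)
        - (-1 : ℚ) ^ b • sg (b + c) (G.br B C) T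
        - (-1 : ℚ) ^ b • sg b B (G.br C T) := by
    have h := hM1 hB hBg hC hCg (hWLS hT) hTg
    rw [hDT, hDBT, hDX1] at h
    simp only [map_zero, smul_zero, add_zero] at h
    exact eq_sub_of_add_eq h
  -- θ_A applied to σ_C T
  have h3 := hM1 hA hAg hC hCg (hWLS hT) hTg
  -- the master identity for A, B at σ_C T
  have h2 := hM1 hA hAg hB hBg hX1L hX1g
  rw [h3] at h2
  rw [hDT, hDAT] at h2
  simp only [map_zero, smul_zero, add_zero] at h2
  rw [hDX2] at h2
  have hmain := eq_sub_of_add_eq h2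
  rw [hmain]
  -- rewrite the bracket terms of the goal
  have hz1 : G.br A (sg b B (sg c C T))
      = (-1 : ℚ) ^ ((b + 1) * a) • sg b B (G.br A (sg c C T)) := hZ hB hBg hA hAg _
  have hz1' : G.br A (sg c C T)
      = (-1 : ℚ) ^ ((c + 1) * a) • sg c C (G.br A T) := hZ hC hCg hA hAg T
  have hz2 : G.br B (sg a A (sg c C T))
      = (-1 : ℚ) ^ ((a + 1) * b) • sg a A (G.br B (sg c C T)) := hZ hA hAg hB hBg _
  have hz2' : G.br B (sg c C T)
      = (-1 : ℚ) ^ ((c + 1) * b) • sg c C (G.br B T) := hZ hC hCg hB hBg T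
  have hABTg : sg a A (sg b B T) ∈ G.grade (t + b + 1 + a + 1) :=
    hsg_grade (hVL hA) hAg (hsg_grade (hVL hB) hBg hTg)
  have hz3 : G.br (sg a A (sg b B T)) C
      = -((-1 : ℚ) ^ ((t + b + 1 + a + 1) * c) • G.br C (sg a A (sg b B T))) :=
    G.antisymm hABTg hCg
  have hz3' : G.br C (sg a A (sg b B T))
      = (-1 : ℚ) ^ ((a + 1) * c) • sg a A (G.br C (sg b B T)) := hZ hA hAg hC hCg _
  have hz3'' : G.br C (sg b B T)
      = (-1 : ℚ) ^ ((b + 1) * c) • sg b B (G.br C T) := hZ hB hBg hC hCg T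
  rw [hz1, hz1', hz2, hz2', hz3, hz3', hz3'']
  simp only [map_add, map_sub, map_smul, smul_add, smul_sub, smul_smul, smul_neg,
    neg_smul, neg_neg, sub_neg_eq_add]
  match_scalars <;> (try simp only [Emul, mul_one])
  · rw [show a * (b + 1) + a * (c + 1) = (b + 1) * a + (c + 1) * a by ring]
  · rw [E1 (m := a * (b + 1) + a) (n := a * b) a (by ring)]
  · rw [E1 (m := a + b + a * b + ((a + 1) * b + (c + 1) * b)) (n := a + b * (c + 1))
      (a * b + b) (by ring)]
  · rw [neg_neg]
  · rw [neg_neg, E1 (m := a + b + c * t + ((t + b + 1 + a + 1) * c + ((a + 1) * c + (b + 1) * c)))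
      (n := a + b) (c * t + b * c + a * c + 2 * c) (by ring)]
end

section
/- The star operator respects graded antisymmetry: for all A, B ∈ 𝕄(V) and T ∈ 𝕃(W), AB ⋆ T = −(−1)^{|A||B|} (BA ⋆ T) in 𝕃(V ⊕ W ⊕ s(V⊗W)). -/
universe u

/-- Trees of the free graded linear magma on the graded subspace family `P`
(homogeneous generators and formal binary products). -/
inductive Mag {Lc : Type u} [AddCommGroup Lc] [Module ℚ Lc]
    (P : ℤ → Submodule ℚ Lc) : Type u
  | of (i : ℤ) (v : Lc) (hv : v ∈ P i) : Mag P
  | mul : Mag P → Mag P → Mag P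

namespace Mag

variable {Lc : Type u} [AddCommGroup Lc] [Module ℚ Lc] {P : ℤ → Submodule ℚ Lc}

/-- Degree of a magma element. -/
def deg : Mag P → ℤ
  | of i _ _ => i
  | mul A B => deg A + deg B

/-- The class of a magma element in the (free) graded Lie algebra. -/
def real (G : GLA Lc) : Mag P → Lc
  | of _ v _ => v
  | mul A B => G.br (real G A) (real G B)

/-- The star operator `⋆ : 𝕄(V) ⊗ 𝕃(W) → L`, applied to a homogeneous element `T`
of degree `t`, defined recursively by `a ⋆ T = 0` for a generator `a` and
`AB ⋆ T = (-1)^{|A|} σ_Ā σ_B̄ (T) + (-1)^{|B||T|} [A ⋆ T, B̄] + [Ā, B ⋆ T]`. -/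
def star (G : GLA Lc) (sg : ℤ → Lc → (Lc →ₗ[ℚ] Lc)) (t : ℤ) : Mag P → Lc → Lc
  | of _ _ _, _ => 0
  | mul A B, T =>
      (-1 : ℚ) ^ deg A • sg (deg A) (real G A) (sg (deg B) (real G B) T)
        + (-1 : ℚ) ^ (deg B * t) • G.br (star G sg t A T) (real G B)
        + G.br (real G A) (star G sg t B T)

end Mag

/-!
Expanding `AB ⋆ T` and `BA ⋆ T`, the bracket terms match by graded antisymmetry (using that
`A ⋆ T` has degree `|A| + |T| + 2`), so everything reduces to the graded commutation
`σ_Ā σ_B̄ = (-1)^{(|A|+1)(|B|+1)} σ_B̄ σ_Ā` on `𝕃(W)`. The graded commutator of two derivations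
is a derivation, so this only has to be checked on generators `w ∈ W`, where both sides vanish:
`σ_B̄ w = ±σ_w(B̄)` lies in the subalgebra generated by `V` and `s(V ⊗ W)`, and `σ_Ā` kills that
subalgebra because it kills `s(V ⊗ W)` and `σ_Ā v = ±σ_v(Ā)`, where the derivation `σ_v` kills
`𝕃(V)`.
-/

theorem neg_one_zpow_eq_of_even_sub {K : Type*} [DivisionRing K] {m n : ℤ} (h : Even (m - n)) :
    (-1 : K) ^ m = (-1) ^ n := by
  rw [← sub_add_cancel m n, zpow_add₀ (neg_ne_zero.2 one_ne_zero), h.neg_one_zpow, one_mul]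

namespace GLA

variable {Lc : Type u} [AddCommGroup Lc] [Module ℚ Lc] (G : GLA Lc)

theorem le_lieSub (p : ℤ → Submodule ℚ Lc) (i : ℤ) : p i ≤ G.lieSub p :=
  le_sInf fun _ hq => hq.1 i

theorem br_mem_lieSub {p : ℤ → Submodule ℚ Lc} {x y : Lc} (hx : x ∈ G.lieSub p)
    (hy : y ∈ G.lieSub p) : G.br x y ∈ G.lieSub p :=
  Submodule.mem_sInf.2 fun q hq =>
    hq.2 x (Submodule.mem_sInf.1 hx q hq) y (Submodule.mem_sInf.1 hy q hq)

theorem lieSub_le {p : ℤ → Submodule ℚ Lc} {q : Submodule ℚ Lc} (hpq : ∀ i, p i ≤ q)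
    (hq : ∀ x ∈ q, ∀ y ∈ q, G.br x y ∈ q) : G.lieSub p ≤ q :=
  sInf_le ⟨hpq, hq⟩

theorem br_mem_span {s : Set Lc} (hs : ∀ x ∈ s, ∀ y ∈ s, G.br x y ∈ Submodule.span ℚ s)
    {x y : Lc} (hx : x ∈ Submodule.span ℚ s) (hy : y ∈ Submodule.span ℚ s) :
    G.br x y ∈ Submodule.span ℚ s := by
  have h := Submodule.apply_mem_map₂ G.br hx hy
  rw [Submodule.map₂_span_span] at h
  exact Submodule.span_le.2 (by rintro _ ⟨a, ha, b, hb, rfl⟩; exact hs a ha b hb) h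

theorem lieSub_induction {p : ℤ → Submodule ℚ Lc} (hp : ∀ i, p i ≤ G.grade i)
    {P : Lc → Prop} (mem : ∀ i, ∀ x ∈ p i, P x) (zero : P 0)
    (add : ∀ x y, P x → P y → P (x + y)) (smul : ∀ (c : ℚ) x, P x → P (c • x))
    (br : ∀ {n m : ℤ} {x y : Lc}, x ∈ G.grade n → y ∈ G.grade m → P x → P y → P (G.br x y))
    {x : Lc} (hx : x ∈ G.lieSub p) : P x := by
  let s : Set Lc := {x | ∃ n, x ∈ G.grade n ∧ P x}
  have hle : G.lieSub p ≤ Submodule.span ℚ s := by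
    refine G.lieSub_le (fun i x hx => Submodule.subset_span ⟨i, hp i hx, mem i x hx⟩)
      fun x hx y hy => G.br_mem_span ?_ hx hy
    rintro x ⟨n, hxn, hPx⟩ y ⟨m, hym, hPy⟩
    exact Submodule.subset_span ⟨n + m, G.br_mem hxn hym, br hxn hym hPx hPy⟩
  exact Submodule.span_induction (p := fun x _ => P x) (fun _ hxs => hxs.choose_spec.2) zero
    (fun x y _ _ => add x y) (fun c x _ => smul c x) (hle hx)

structure IsDerivation (d : ℤ) (f : Lc →ₗ[ℚ] Lc) : Prop where
  map_br : ∀ {n : ℤ} (x y : Lc), x ∈ G.grade n →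
    f (G.br x y) = G.br (f x) y + (-1 : ℚ) ^ (d * n) • G.br x (f y)

variable {G} {d e : ℤ} {f g : Lc →ₗ[ℚ] Lc} {p : ℤ → Submodule ℚ Lc}

theorem IsDerivation.lieSub_le_ker (hf : G.IsDerivation d f) (hp : ∀ i, p i ≤ G.grade i)
    (hgen : ∀ i, p i ≤ LinearMap.ker f) : G.lieSub p ≤ LinearMap.ker f := fun _ hx =>
  G.lieSub_induction hp (P := fun x => f x = 0) (fun i _ hx => hgen i hx) (map_zero f)
    (fun _ _ hx hy => by rw [map_add, hx, hy, add_zero])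
    (fun _ _ hx => by rw [map_smul, hx, smul_zero])
    (fun hx _ hfx hfy => by rw [hf.map_br _ _ hx, hfx, hfy]; simp) hx

theorem IsDerivation.map_mem_lieSub (hf : G.IsDerivation d f) (hp : ∀ i, p i ≤ G.grade i)
    {q : ℤ → Submodule ℚ Lc} (hpq : ∀ i, p i ≤ G.lieSub q)
    (hfp : ∀ i, ∀ x ∈ p i, f x ∈ G.lieSub q) {x : Lc} (hx : x ∈ G.lieSub p) :
    f x ∈ G.lieSub q :=
  (G.lieSub_induction hp (P := fun x => x ∈ G.lieSub q ∧ f x ∈ G.lieSub q)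
    (fun i x hx => ⟨hpq i hx, hfp i x hx⟩) ⟨zero_mem _, by rw [map_zero]; exact zero_mem _⟩
    (fun _ _ hx hy => ⟨add_mem hx.1 hy.1, by rw [map_add]; exact add_mem hx.2 hy.2⟩)
    (fun c _ hx => ⟨Submodule.smul_mem _ c hx.1,
      by rw [map_smul]; exact Submodule.smul_mem _ c hx.2⟩)
    (fun hx _ hPx hPy => ⟨G.br_mem_lieSub hPx.1 hPy.1, by
      rw [hf.map_br _ _ hx]
      exact add_mem (G.br_mem_lieSub hPx.2 hPy.1)
        (Submodule.smul_mem _ _ (G.br_mem_lieSub hPx.1 hPy.2))⟩) hx).2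

theorem IsDerivation.commutator (hf : G.IsDerivation d f) (hg : G.IsDerivation e g)
    (hf_grade : ∀ {n : ℤ} {x : Lc}, x ∈ G.grade n → f x ∈ G.grade (n + d))
    (hg_grade : ∀ {n : ℤ} {x : Lc}, x ∈ G.grade n → g x ∈ G.grade (n + e)) :
    G.IsDerivation (d + e) (f ∘ₗ g - (-1 : ℚ) ^ (d * e) • (g ∘ₗ f)) := by
  refine ⟨fun {n} x y hx => ?_⟩
  have hne : (-1 : ℚ) ≠ 0 := by norm_num
  have s1 : (-1 : ℚ) ^ (d * (n + e)) = (-1) ^ (d * e) * (-1) ^ (d * n) := by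
    rw [← zpow_add₀ hne]; exact neg_one_zpow_eq_of_even_sub ⟨0, by ring⟩
  have s2 : (-1 : ℚ) ^ (e * n) = (-1) ^ (d * e) * (-1) ^ (e * (n + d)) := by
    rw [← zpow_add₀ hne]; exact neg_one_zpow_eq_of_even_sub ⟨-(d * e), by ring⟩
  have s3 : (-1 : ℚ) ^ ((d + e) * n) = (-1) ^ (d * n) * (-1) ^ (e * n) := by
    rw [← zpow_add₀ hne, add_mul]
  simp only [LinearMap.sub_apply, LinearMap.smul_apply, LinearMap.comp_apply]
  rw [hg.map_br x y hx, hf.map_br x y hx, map_add, map_smul, map_add, map_smul,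
    hf.map_br _ y (hg_grade hx), hf.map_br x _ hx, hg.map_br _ y (hf_grade hx), hg.map_br x _ hx,
    s3, s1, s2]
  simp only [map_sub, map_smul, LinearMap.sub_apply, LinearMap.smul_apply]
  module

end GLA

namespace Mag

variable {Lc : Type u} [AddCommGroup Lc] [Module ℚ Lc] {G : GLA Lc}
  {P : ℤ → Submodule ℚ Lc} {sg : ℤ → Lc → (Lc →ₗ[ℚ] Lc)}

theorem real_mem_grade (hP : ∀ i, P i ≤ G.grade i) (C : Mag P) : real G C ∈ G.grade C.deg := by
  induction C with
  | of i v hv => exact hP i hv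
  | mul A B hA hB => exact G.br_mem hA hB

theorem real_mem_lieSub {q : ℤ → Submodule ℚ Lc} (hPq : ∀ i, P i ≤ q i) (C : Mag P) :
    real G C ∈ G.lieSub q := by
  induction C with
  | of i v hv => exact G.le_lieSub q i (hPq i hv)
  | mul A B hA hB => exact G.br_mem_lieSub hA hB

theorem star_mem_grade (hsg_grade : ∀ (C : Mag P) {n : ℤ} {x : Lc}, x ∈ G.grade n →
      sg C.deg (real G C) x ∈ G.grade (n + C.deg + 1))
    (hP : ∀ i, P i ≤ G.grade i) (C : Mag P) {t : ℤ} {T : Lc} (hT : T ∈ G.grade t) :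
    star G sg t C T ∈ G.grade (C.deg + t + 2) := by
  induction C with
  | of i v hv => exact zero_mem _
  | mul A B hA hB =>
    have hσσ := hsg_grade A (hsg_grade B hT)
    have hAB := G.br_mem hA (real_mem_grade hP B)
    have hBA := G.br_mem (real_mem_grade hP A) hB
    rw [star, deg]
    refine add_mem (add_mem (Submodule.smul_mem _ _ ?_) (Submodule.smul_mem _ _ ?_)) ?_
    · convert hσσ using 2; ring
    · convert hAB using 2; ring
    · convert hBA using 2; ring

theorem star_mul_eq_neg_of_comm (hsg_grade : ∀ (C : Mag P) {n : ℤ} {x : Lc}, x ∈ G.grade n →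
      sg C.deg (real G C) x ∈ G.grade (n + C.deg + 1))
    (hP : ∀ i, P i ≤ G.grade i) (A B : Mag P) {t : ℤ} {T : Lc} (hT : T ∈ G.grade t)
    (hcomm : sg A.deg (real G A) (sg B.deg (real G B) T)
      = (-1 : ℚ) ^ ((A.deg + 1) * (B.deg + 1)) • sg B.deg (real G B) (sg A.deg (real G A) T)) :
    star G sg t (mul A B) T = -((-1 : ℚ) ^ (A.deg * B.deg) • star G sg t (mul B A) T) := by
  rw [star, star, hcomm, G.antisymm (star_mem_grade hsg_grade hP A hT) (real_mem_grade hP B),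
    G.antisymm (real_mem_grade hP A) (star_mem_grade hsg_grade hP B hT)]
  set a := A.deg
  set b := B.deg
  have hne : (-1 : ℚ) ≠ 0 := by norm_num
  have s1 : (-1 : ℚ) ^ a * (-1) ^ ((a + 1) * (b + 1)) = -((-1) ^ (a * b) * (-1) ^ b) := by
    rw [← zpow_add₀ hne, ← zpow_add₀ hne, ← neg_one_mul ((-1 : ℚ) ^ (a * b + b)),
      ← zpow_one_add₀ hne]
    exact neg_one_zpow_eq_of_even_sub ⟨a, by ring⟩
  have s2 : (-1 : ℚ) ^ (b * t) * (-1) ^ ((a + t + 2) * b) = (-1) ^ (a * b) := by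
    rw [← zpow_add₀ hne]; exact neg_one_zpow_eq_of_even_sub ⟨b * t + b, by ring⟩
  have s3 : (-1 : ℚ) ^ (a * (b + t + 2)) = (-1) ^ (a * b) * (-1) ^ (a * t) := by
    rw [← zpow_add₀ hne]; exact neg_one_zpow_eq_of_even_sub ⟨a, by ring⟩
  rw [smul_smul, s1, smul_neg, smul_smul, s2, s3]
  module

end Mag

section Sigma

variable {Lc : Type u} [AddCommGroup Lc] [Module ℚ Lc] {G : GLA Lc}
  {V W Sp : ℤ → Submodule ℚ Lc} {sg : ℤ → Lc → (Lc →ₗ[ℚ] Lc)}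

theorem sg_apply_real_eq_zero (hV : ∀ i, V i ≤ G.grade i)
    (hσ : ∀ {a : ℤ} {A : Lc}, A ∈ G.lieSub (fun i => V i ⊔ W i) → A ∈ G.grade a →
      G.IsDerivation (a + 1) (sg a A))
    (hsg_vv : ∀ {i i' : ℤ} {v v' : Lc}, v ∈ V i → v' ∈ V i' → sg i v v' = 0)
    {i : ℤ} {v : Lc} (hv : v ∈ V i) (C : Mag V) : sg i v (Mag.real G C) = 0 :=
  (hσ (G.le_lieSub _ i (Submodule.mem_sup_left hv)) (hV i hv)).lieSub_le_ker hV
    (fun _ _ hv' => hsg_vv hv hv') (Mag.real_mem_lieSub (fun _ => le_rfl) C)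

theorem lieSub_le_ker_sg_real (hV : ∀ i, V i ≤ G.grade i) (hSp : ∀ i, Sp i ≤ G.grade i)
    (hσ : ∀ {a : ℤ} {A : Lc}, A ∈ G.lieSub (fun i => V i ⊔ W i) → A ∈ G.grade a →
      G.IsDerivation (a + 1) (sg a A))
    (hsg_vv : ∀ {i i' : ℤ} {v v' : Lc}, v ∈ V i → v' ∈ V i' → sg i v v' = 0)
    (hsg_Av : ∀ {a : ℤ} {A : Lc}, A ∈ G.lieSub (fun i => V i ⊔ W i) → A ∈ G.grade a →
      ∀ {i : ℤ} {v : Lc}, v ∈ V i → sg a A v = (-1 : ℚ) ^ (i * a) • sg i v A)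
    (hsg_AS : ∀ {a : ℤ} {A : Lc}, A ∈ G.lieSub (fun i => V i ⊔ W i) → A ∈ G.grade a →
      ∀ {k : ℤ} {x : Lc}, x ∈ Sp k → sg a A x = 0)
    (C : Mag V) :
    G.lieSub (fun i => V i ⊔ Sp i) ≤ LinearMap.ker (sg C.deg (Mag.real G C)) := by
  have hCl := Mag.real_mem_lieSub (G := G) (q := fun i => V i ⊔ W i) (fun _ => le_sup_left) C
  have hCg := Mag.real_mem_grade hV C
  refine (hσ hCl hCg).lieSub_le_ker (fun i => sup_le (hV i) (hSp i)) fun i => sup_le ?_ ?_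
  · intro v hv
    rw [LinearMap.mem_ker, hsg_Av hCl hCg hv, sg_apply_real_eq_zero hV hσ hsg_vv hv, smul_zero]
  · exact fun x hx => hsg_AS hCl hCg hx

theorem sg_apply_real_mem_lieSub (hV : ∀ i, V i ≤ G.grade i) (hW : ∀ i, W i ≤ G.grade i)
    {sus : Lc →ₗ[ℚ] Lc →ₗ[ℚ] Lc}
    (hsus : ∀ {i j : ℤ} {v w : Lc}, v ∈ V i → w ∈ W j → sus v w ∈ Sp (i + j + 1))
    (hσ : ∀ {a : ℤ} {A : Lc}, A ∈ G.lieSub (fun i => V i ⊔ W i) → A ∈ G.grade a →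
      G.IsDerivation (a + 1) (sg a A))
    (hsg_wv : ∀ {i j : ℤ} {v w : Lc}, v ∈ V i → w ∈ W j →
      sg j w v = (-1 : ℚ) ^ (i * j) • sus v w)
    {j : ℤ} {w : Lc} (hw : w ∈ W j) (C : Mag V) :
    sg j w (Mag.real G C) ∈ G.lieSub (fun i => V i ⊔ Sp i) := by
  refine (hσ (G.le_lieSub _ j (Submodule.mem_sup_right hw)) (hW j hw)).map_mem_lieSub hV
    (fun i => le_sup_left.trans (G.le_lieSub (fun i => V i ⊔ Sp i) i)) (fun i v hv => ?_)
    (Mag.real_mem_lieSub (fun _ => le_rfl) C)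
  rw [hsg_wv hv hw]
  exact Submodule.smul_mem _ _ (G.le_lieSub _ _ (Submodule.mem_sup_right (hsus hv hw)))

theorem sg_real_comm (hV : ∀ i, V i ≤ G.grade i) (hW : ∀ i, W i ≤ G.grade i)
    (hSp : ∀ i, Sp i ≤ G.grade i) {sus : Lc →ₗ[ℚ] Lc →ₗ[ℚ] Lc}
    (hsus : ∀ {i j : ℤ} {v w : Lc}, v ∈ V i → w ∈ W j → sus v w ∈ Sp (i + j + 1))
    (hσ : ∀ {a : ℤ} {A : Lc}, A ∈ G.lieSub (fun i => V i ⊔ W i) → A ∈ G.grade a →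
      G.IsDerivation (a + 1) (sg a A))
    (hsg_grade : ∀ {a : ℤ} {A : Lc}, A ∈ G.lieSub (fun i => V i ⊔ W i) → A ∈ G.grade a →
      ∀ {n : ℤ} {x : Lc}, x ∈ G.grade n → sg a A x ∈ G.grade (n + a + 1))
    (hsg_wv : ∀ {i j : ℤ} {v w : Lc}, v ∈ V i → w ∈ W j →
      sg j w v = (-1 : ℚ) ^ (i * j) • sus v w)
    (hsg_vv : ∀ {i i' : ℤ} {v v' : Lc}, v ∈ V i → v' ∈ V i' → sg i v v' = 0)
    (hsg_Av : ∀ {a : ℤ} {A : Lc}, A ∈ G.lieSub (fun i => V i ⊔ W i) → A ∈ G.grade a →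
      ∀ {i : ℤ} {v : Lc}, v ∈ V i → sg a A v = (-1 : ℚ) ^ (i * a) • sg i v A)
    (hsg_Aw : ∀ {a : ℤ} {A : Lc}, A ∈ G.lieSub (fun i => V i ⊔ W i) → A ∈ G.grade a →
      ∀ {j : ℤ} {w : Lc}, w ∈ W j → sg a A w = (-1 : ℚ) ^ (j * a) • sg j w A)
    (hsg_AS : ∀ {a : ℤ} {A : Lc}, A ∈ G.lieSub (fun i => V i ⊔ W i) → A ∈ G.grade a →
      ∀ {k : ℤ} {x : Lc}, x ∈ Sp k → sg a A x = 0)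
    (C D : Mag V) {T : Lc} (hT : T ∈ G.lieSub W) :
    sg C.deg (Mag.real G C) (sg D.deg (Mag.real G D) T)
      = (-1 : ℚ) ^ ((C.deg + 1) * (D.deg + 1)) •
        sg D.deg (Mag.real G D) (sg C.deg (Mag.real G C) T) := by
  have hl (C : Mag V) := Mag.real_mem_lieSub (G := G) (q := fun i => V i ⊔ W i)
    (fun _ => le_sup_left) C
  have hg (C : Mag V) := Mag.real_mem_grade hV C
  have hgrade (C : Mag V) {n : ℤ} {x : Lc} (hx : x ∈ G.grade n) :
      sg C.deg (Mag.real G C) x ∈ G.grade (n + (C.deg + 1)) := by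
    rw [← add_assoc]; exact hsg_grade (hl C) (hg C) hx
  have hkill (C D : Mag V) {j : ℤ} {w : Lc} (hw : w ∈ W j) :
      sg C.deg (Mag.real G C) (sg D.deg (Mag.real G D) w) = 0 := by
    rw [hsg_Aw (hl D) (hg D) hw, map_smul,
      lieSub_le_ker_sg_real hV hSp hσ hsg_vv hsg_Av hsg_AS C
        (sg_apply_real_mem_lieSub hV hW hsus hσ hsg_wv hw D), smul_zero]
  have hcomm := (hσ (hl C) (hg C)).commutator (hσ (hl D) (hg D)) (hgrade C) (hgrade D)
  have hker := hcomm.lieSub_le_ker hW (fun j w hw => by simp [hkill C D hw, hkill D C hw]) hT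
  rwa [LinearMap.mem_ker, LinearMap.sub_apply, sub_eq_zero] at hker

end Sigma

theorem statement12_general
    {Lc : Type u} [AddCommGroup Lc] [Module ℚ Lc] (G : GLA Lc)
    (V W Sp : ℤ → Submodule ℚ Lc)
    (hV : ∀ i, V i ≤ G.grade i) (hW : ∀ i, W i ≤ G.grade i) (hSp : ∀ i, Sp i ≤ G.grade i)
    -- the suspension `s(v ⊗ w)`, bilinear, of degree `|v|+|w|+1`
    (sus : Lc →ₗ[ℚ] Lc →ₗ[ℚ] Lc)
    (hsus : ∀ {i j : ℤ} {v w : Lc}, v ∈ V i → w ∈ W j → sus v w ∈ Sp (i + j + 1))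
    -- the derivations `σ_A` for homogeneous `A ∈ 𝕃(V ⊕ W)`: `σ_A` has degree `|A| + 1`,
    -- `σ_v(w) = s(v⊗w)`, `σ_w(v) = (-1)^{|v||w|} s(v⊗w)`, `σ_v(v') = σ_w(w') = 0`,
    -- `σ_v`, `σ_w` vanish on `s(V⊗W)`, and on generators
    -- `σ_A(v) = (-1)^{|v||A|} σ_v(A)`, `σ_A(w) = (-1)^{|w||A|} σ_w(A)`, `σ_A(s(v⊗w)) = 0`
    (sg : ℤ → Lc → (Lc →ₗ[ℚ] Lc))
    (hsg_grade : ∀ {a : ℤ} {A : Lc}, A ∈ G.lieSub (fun i => V i ⊔ W i) → A ∈ G.grade a →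
      ∀ {n : ℤ} {x : Lc}, x ∈ G.grade n → sg a A x ∈ G.grade (n + a + 1))
    (hsg_der : ∀ {a : ℤ} {A : Lc}, A ∈ G.lieSub (fun i => V i ⊔ W i) → A ∈ G.grade a →
      ∀ {n : ℤ} (x y : Lc), x ∈ G.grade n →
      sg a A (G.br x y) = G.br (sg a A x) y + (-1 : ℚ) ^ ((a + 1) * n) • G.br x (sg a A y))
    (hsg_wv : ∀ {i j : ℤ} {v w : Lc}, v ∈ V i → w ∈ W j →
      sg j w v = (-1 : ℚ) ^ (i * j) • sus v w)
    (hsg_vv : ∀ {i i' : ℤ} {v v' : Lc}, v ∈ V i → v' ∈ V i' → sg i v v' = 0)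
    (hsg_Av : ∀ {a : ℤ} {A : Lc}, A ∈ G.lieSub (fun i => V i ⊔ W i) → A ∈ G.grade a →
      ∀ {i : ℤ} {v : Lc}, v ∈ V i → sg a A v = (-1 : ℚ) ^ (i * a) • sg i v A)
    (hsg_Aw : ∀ {a : ℤ} {A : Lc}, A ∈ G.lieSub (fun i => V i ⊔ W i) → A ∈ G.grade a →
      ∀ {j : ℤ} {w : Lc}, w ∈ W j → sg a A w = (-1 : ℚ) ^ (j * a) • sg j w A)
    (hsg_AS : ∀ {a : ℤ} {A : Lc}, A ∈ G.lieSub (fun i => V i ⊔ W i) → A ∈ G.grade a →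
      ∀ {k : ℤ} {x : Lc}, x ∈ Sp k → sg a A x = 0)
 :
    ∀ (A B : Mag V) {t : ℤ} {T : Lc}, T ∈ G.lieSub W → T ∈ G.grade t →
      Mag.star G sg t (Mag.mul A B) T
        = -((-1 : ℚ) ^ (Mag.deg A * Mag.deg B) • Mag.star G sg t (Mag.mul B A) T) := by
  intro A B t T hTW hT
  have hσ : ∀ {a : ℤ} {A : Lc}, A ∈ G.lieSub (fun i => V i ⊔ W i) → A ∈ G.grade a →
      G.IsDerivation (a + 1) (sg a A) := fun hA ha => ⟨hsg_der hA ha⟩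
  have hσ_grade (C : Mag V) {n : ℤ} {x : Lc} (hx : x ∈ G.grade n) :=
    hsg_grade (Mag.real_mem_lieSub (fun _ => le_sup_left) C) (Mag.real_mem_grade hV C) hx
  exact Mag.star_mul_eq_neg_of_comm hσ_grade hV A B hT
    (sg_real_comm hV hW hSp hsus hσ hsg_grade hsg_wv hsg_vv hsg_Av hsg_Aw hsg_AS A B hTW)

/-- Remark 3.14.  The star operator respects graded antisymmetry:
for all `A, B ∈ 𝕄(V)` and all homogeneous `T ∈ 𝕃(W)`,
`AB ⋆ T = -(-1)^{|A||B|} (BA ⋆ T)` in `𝕃(V ⊕ W ⊕ s(V⊗W))`. -/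
theorem statement12
    {Lc : Type u} [AddCommGroup Lc] [Module ℚ Lc] (G : GLA Lc)
    (V W Sp : ℤ → Submodule ℚ Lc)
    -- `V` and `W` are reduced graded vector spaces
    (hVred : ∀ i : ℤ, i ≤ 0 → V i = ⊥) (hWred : ∀ i : ℤ, i ≤ 0 → W i = ⊥)
    (hV : ∀ i, V i ≤ G.grade i) (hW : ∀ i, W i ≤ G.grade i) (hSp : ∀ i, Sp i ≤ G.grade i)
    -- the suspension `s(v ⊗ w)`, bilinear, of degree `|v|+|w|+1`
    (sus : Lc →ₗ[ℚ] Lc →ₗ[ℚ] Lc)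
    (hsus : ∀ {i j : ℤ} {v w : Lc}, v ∈ V i → w ∈ W j → sus v w ∈ Sp (i + j + 1))
    -- `L = 𝕃(V ⊕ W ⊕ s(V ⊗ W))` is generated by `V ⊕ W ⊕ s(V ⊗ W)`
    (hgen : G.lieSub (fun i => V i ⊔ W i ⊔ Sp i) = ⊤)
    -- the derivations `σ_A` for homogeneous `A ∈ 𝕃(V ⊕ W)`: `σ_A` has degree `|A| + 1`,
    -- `σ_v(w) = s(v⊗w)`, `σ_w(v) = (-1)^{|v||w|} s(v⊗w)`, `σ_v(v') = σ_w(w') = 0`,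
    -- `σ_v`, `σ_w` vanish on `s(V⊗W)`, and on generators
    -- `σ_A(v) = (-1)^{|v||A|} σ_v(A)`, `σ_A(w) = (-1)^{|w||A|} σ_w(A)`, `σ_A(s(v⊗w)) = 0`
    (sg : ℤ → Lc → (Lc →ₗ[ℚ] Lc))
    (hsg_grade : ∀ {a : ℤ} {A : Lc}, A ∈ G.lieSub (fun i => V i ⊔ W i) → A ∈ G.grade a →
      ∀ {n : ℤ} {x : Lc}, x ∈ G.grade n → sg a A x ∈ G.grade (n + a + 1))
    (hsg_der : ∀ {a : ℤ} {A : Lc}, A ∈ G.lieSub (fun i => V i ⊔ W i) → A ∈ G.grade a →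
      ∀ {n : ℤ} (x y : Lc), x ∈ G.grade n →
      sg a A (G.br x y) = G.br (sg a A x) y + (-1 : ℚ) ^ ((a + 1) * n) • G.br x (sg a A y))
    (hsg_vw : ∀ {i j : ℤ} {v w : Lc}, v ∈ V i → w ∈ W j → sg i v w = sus v w)
    (hsg_wv : ∀ {i j : ℤ} {v w : Lc}, v ∈ V i → w ∈ W j →
      sg j w v = (-1 : ℚ) ^ (i * j) • sus v w)
    (hsg_vv : ∀ {i i' : ℤ} {v v' : Lc}, v ∈ V i → v' ∈ V i' → sg i v v' = 0)
    (hsg_ww : ∀ {j j' : ℤ} {w w' : Lc}, w ∈ W j → w' ∈ W j' → sg j w w' = 0)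
    (hsg_vS : ∀ {i k : ℤ} {v x : Lc}, v ∈ V i → x ∈ Sp k → sg i v x = 0)
    (hsg_wS : ∀ {j k : ℤ} {w x : Lc}, w ∈ W j → x ∈ Sp k → sg j w x = 0)
    (hsg_Av : ∀ {a : ℤ} {A : Lc}, A ∈ G.lieSub (fun i => V i ⊔ W i) → A ∈ G.grade a →
      ∀ {i : ℤ} {v : Lc}, v ∈ V i → sg a A v = (-1 : ℚ) ^ (i * a) • sg i v A)
    (hsg_Aw : ∀ {a : ℤ} {A : Lc}, A ∈ G.lieSub (fun i => V i ⊔ W i) → A ∈ G.grade a →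
      ∀ {j : ℤ} {w : Lc}, w ∈ W j → sg a A w = (-1 : ℚ) ^ (j * a) • sg j w A)
    (hsg_AS : ∀ {a : ℤ} {A : Lc}, A ∈ G.lieSub (fun i => V i ⊔ W i) → A ∈ G.grade a →
      ∀ {k : ℤ} {x : Lc}, x ∈ Sp k → sg a A x = 0)
 :
    ∀ (A B : Mag V) {t : ℤ} {T : Lc}, T ∈ G.lieSub W → T ∈ G.grade t →
      Mag.star G sg t (Mag.mul A B) T
        = -((-1 : ℚ) ^ (Mag.deg A * Mag.deg B) • Mag.star G sg t (Mag.mul B A) T) :=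
  statement12_general G V W Sp hV hW hSp sus hsus sg hsg_grade hsg_der hsg_wv hsg_vv hsg_Av hsg_Aw
    hsg_AS
end
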